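/- For every pair of incompatible column types β₁ and β₂ (i.e., β₁ and β₂ are incomparable under column subtyping), there exists a base type interpolant: a column type β such that (1) β₁ ≤ β, (2) β is not compatible with β₂, and (3) every column type β' with β ≤ β' and β' ≠ β is compatible with β₂. -/

import Mathlib

/-- Column types in the refinement type system. -/
inductive ColTy where
  | top | quantitative | qualitative | discrete | continuous
  | nominal | ordinal | temporal
deriving DecidableEq

/-- The subtyping axioms on column types. -/
inductive ColSubAx : ColTy → ColTy → Prop where
  | quant_top : ColSubAx .quantitative .top
  | qual_top  : ColSubAx .qualitative .top
  | disc_quant : ColSubAx .discrete .quantitative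
  | cont_quant : ColSubAx .continuous .quantitative
  | nom_qual  : ColSubAx .nominal .qualitative
  | ord_qual  : ColSubAx .ordinal .qualitative
  | temp_qual : ColSubAx .temporal .qualitative

/-- Column subtyping: the reflexive-transitive closure of the axioms. -/
def ColSub : ColTy → ColTy → Prop := Relation.ReflTransGen ColSubAx

/-- Two column types are compatible iff one is a subtype of the other. -/
def ColCompat (β₁ β₂ : ColTy) : Prop := ColSub β₁ β₂ ∨ ColSub β₂ β₁

/-!
Subtyping is a partial order on the finite set of column types: every axiom strictly raises the
level of a type in the hierarchy, so no cycle of strict subtypings exists. An interpolant for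
incompatible `β₁`, `β₂` is then a maximal supertype of `β₁` among the types incompatible with `β₂`.
-/

open Relation

theorem Relation.ReflTransGen.antisymm_of_map_lt {α β : Type*} [Preorder β] {r : α → α → Prop}
    (f : α → β) (hf : ∀ ⦃a b⦄, r a b → f a < f b) {a b : α}
    (hab : ReflTransGen r a b) (hba : ReflTransGen r b a) : a = b := by
  have map_lt : ∀ {x y}, TransGen r x y → f x < f y := fun h => by
    simpa only [transGen_eq_self] using h.lift f hf
  rcases reflTransGen_iff_eq_or_transGen.1 hab with rfl | hab
  · rfl
  rcases reflTransGen_iff_eq_or_transGen.1 hba with rfl | hba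
  · rfl
  exact absurd (map_lt hab) (map_lt hba).asymm

def IsBaseInterpolant {α : Type*} [Preorder α] (a b c : α) : Prop :=
  a ≤ c ∧ IncompRel (· ≤ ·) c b ∧ ∀ d, c < d → SymmGen (· ≤ ·) d b

theorem exists_isBaseInterpolant {α : Type*} [Preorder α] [Finite α] {a b : α}
    (h : IncompRel (· ≤ ·) a b) : ∃ c, IsBaseInterpolant a b c := by
  obtain ⟨c, hac, hc⟩ := Finite.exists_le_maximal (p := (IncompRel (· ≤ ·) · b)) h
  exact ⟨c, hac, hc.prop, fun d hcd => not_incompRel_iff_symmGen.1 (hc.not_prop_of_gt hcd)⟩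

namespace ColTy

def level : ColTy → ℕ
  | top => 2
  | quantitative | qualitative => 1
  | discrete | continuous | nominal | ordinal | temporal => 0

theorem level_lt_of_colSubAx {a b : ColTy} (h : ColSubAx a b) : a.level < b.level := by
  cases h <;> decide

instance : PartialOrder ColTy where
  le := ColSub
  le_refl _ := .refl
  le_trans _ _ _ := .trans
  le_antisymm _ _ := ReflTransGen.antisymm_of_map_lt level fun _ _ => level_lt_of_colSubAx

instance : Finite ColTy :=
  Finite.of_surjective ![top, quantitative, qualitative, discrete, continuous, nominal, ordinal,
    temporal] fun a => by cases a <;> decide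

end ColTy

/-- Every pair of incompatible column types has a base type interpolant. -/
theorem exists_colTy_interpolant (β₁ β₂ : ColTy) (h : ¬ ColCompat β₁ β₂) :
    ∃ β : ColTy,
      ColSub β₁ β ∧
      ¬ ColCompat β β₂ ∧
      (∀ β' : ColTy, ColSub β β' → β' ≠ β → ColCompat β' β₂) := by
  have hincomp : IncompRel (· ≤ ·) β₁ β₂ := not_symmGen_iff.1 h
  obtain ⟨β, hβ₁, hβ, hmax⟩ := exists_isBaseInterpolant hincomp
  exact ⟨β, hβ₁, not_symmGen_iff.2 hβ, fun β' hle hne => hmax β' (lt_of_le_of_ne hle hne.symm)⟩
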